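/- arXiv:2511.03870 — 2 statements merged into one kernel-verified Lean document; each statement's English description precedes it below -/
import Mathlib

section
/- For every integer N ≥ 2, the inverse (adjoint) of the N-qubit CNOT ladder equals a positive power of itself: (Ladder_CNOT)^{†} = (Ladder_CNOT)^{2^{⌈log₂ N⌉} − 1}, where ⌈log₂ N⌉ is the least integer m with N ≤ 2^m. -/
open Complex Matrix

noncomputable section

/-- Basis states of `N` qubits: bit strings of length `N` (qubit `k` (1-based) ↦ index `k-1`). -/
abbrev QState (N : ℕ) := Fin N → ZMod 2

/-- Operators on `(ℂ²)^{⊗N}`, as matrices in the computational basis. -/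
abbrev QOp (N : ℕ) := Matrix (QState N) (QState N) ℂ

/-- Ry(θ) = [[cos(θ/2), −sin(θ/2)], [sin(θ/2), cos(θ/2)]]. -/
def RyM (θ : ℝ) : Matrix (ZMod 2) (ZMod 2) ℂ :=
  Matrix.of fun a b =>
    if a = 0 then (if b = 0 then ((Real.cos (θ/2) : ℝ) : ℂ) else -((Real.sin (θ/2) : ℝ) : ℂ))
    else (if b = 0 then ((Real.sin (θ/2) : ℝ) : ℂ) else ((Real.cos (θ/2) : ℝ) : ℂ))

/-- Rz(θ) = diag(e^{−iθ/2}, e^{iθ/2}). -/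
def RzM (θ : ℝ) : Matrix (ZMod 2) (ZMod 2) ℂ :=
  Matrix.of fun a b =>
    if a = b then
      (if a = 0 then Complex.exp (-(θ/2 : ℝ) * Complex.I) else Complex.exp ((θ/2 : ℝ) * Complex.I))
    else 0

/-- Hadamard gate. -/
def HM : Matrix (ZMod 2) (ZMod 2) ℂ :=
  Matrix.of fun a b => (1 / ((Real.sqrt 2 : ℝ) : ℂ)) * (if a = 1 ∧ b = 1 then -1 else 1)

/-- T gate = diag(1, e^{iπ/4}). -/
def TM : Matrix (ZMod 2) (ZMod 2) ℂ :=
  Matrix.of fun a b =>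
    if a = b then (if a = 0 then 1 else Complex.exp ((Real.pi/4 : ℝ) * Complex.I)) else 0

/-- S gate = diag(1, i). -/
def SM : Matrix (ZMod 2) (ZMod 2) ℂ :=
  Matrix.of fun a b => if a = b then (if a = 0 then 1 else Complex.I) else 0

/-- S† gate = diag(1, −i). -/
def SdgM : Matrix (ZMod 2) (ZMod 2) ℂ :=
  Matrix.of fun a b => if a = b then (if a = 0 then 1 else -Complex.I) else 0

/-- Pauli X gate. -/
def XM : Matrix (ZMod 2) (ZMod 2) ℂ :=
  Matrix.of fun a b => if a = b then 0 else 1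

/-- A single-qubit gate `g` acting on qubit with 0-based index `k`, identity elsewhere. -/
def gate1 {N : ℕ} (g : Matrix (ZMod 2) (ZMod 2) ℂ) (k : Fin N) : QOp N :=
  Matrix.of fun x y => if ∀ j, j ≠ k → x j = y j then g (x k) (y k) else 0

/-- CZ gate on (0-based) qubits `k`, `l`. -/
def CZg {N : ℕ} (k l : Fin N) : QOp N :=
  Matrix.of fun x y => if x = y then (if x k = 1 ∧ x l = 1 then (-1 : ℂ) else 1) else 0

/-- CNOT gate with control `c` and target `t` (0-based): |y⟩ ↦ |y with bit t replaced by y t + y c⟩. -/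
def CNOTg {N : ℕ} (c t : Fin N) : QOp N :=
  Matrix.of fun x y => if x = Function.update y t (y t + y c) then (1 : ℂ) else 0

/-- The `k`-th bit (0-based) of a basis state, `0` when out of range. -/
def bitAt {N : ℕ} (x : QState N) (k : ℕ) : ZMod 2 :=
  if h : k < N then x ⟨k, h⟩ else 0

/-- Ladder of CZ gates: `∏_{k=1}^{N−1} CZ_{k,k+1}` (all factors commute, so it is
the diagonal matrix with entry `(−1)^{#{adjacent 11 pairs}}`). -/
def ladderCZ (N : ℕ) : QOp N :=
  Matrix.of fun x y =>
    if x = y then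
      ∏ k ∈ Finset.range (N - 1), (if bitAt x k = 1 ∧ bitAt x (k + 1) = 1 then (-1 : ℂ) else 1)
    else 0

/-- First CNOT layer of the ladder: simultaneous CNOT_{k+1,k} for 1-based `k ∈ {1,…,N−1}`,
`k ≢ N (mod 2)` (control qubit `k+1`, target qubit `k`; disjoint pairs). -/
def layer1Map (N : ℕ) (y : QState N) : QState N :=
  fun i => if (i : ℕ) + 1 < N ∧ ((i : ℕ) + 1) % 2 ≠ N % 2 then y i + bitAt y ((i : ℕ) + 1) else y i

/-- Second CNOT layer of the ladder: simultaneous CNOT_{k+1,k} for 1-based `k ∈ {1,…,N−1}`,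
`k ≡ N (mod 2)`. -/
def layer2Map (N : ℕ) (y : QState N) : QState N :=
  fun i => if (i : ℕ) + 1 < N ∧ ((i : ℕ) + 1) % 2 = N % 2 then y i + bitAt y ((i : ℕ) + 1) else y i

/-- Ladder of CNOT gates: `L₂ · L₁` with `L₁` applied first. It is a permutation
matrix of the composed bit-string map. -/
def ladderCNOT (N : ℕ) : QOp N :=
  Matrix.of fun x y => if x = layer2Map N (layer1Map N y) then (1 : ℂ) else 0

/-- Rotation layer `⊗_{k} Rz(β_k)·Ry(α_k)`. -/
def rotYZ {N : ℕ} (α β : Fin N → ℝ) : QOp N :=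
  Matrix.of fun x y => ∏ k : Fin N, (RzM (β k) * RyM (α k)) (x k) (y k)

/-- The Ry-Rz-CZ ansatz of depth `M`:
`R_M · Ladder_CZ · R_{M−1} ⋯ Ladder_CZ · R_0` (`R_0` applied first), with
rotation layer `i` using angles `α i`, `β i`. -/
def ansatzYZ (N : ℕ) (α β : ℕ → Fin N → ℝ) : ℕ → QOp N
  | 0 => rotYZ (α 0) (β 0)
  | (M + 1) => rotYZ (α (M + 1)) (β (M + 1)) * ladderCZ N * ansatzYZ N α β M

/-- Rotation layer `⊗_{k} Ry(α_k)`. -/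
def rotY {N : ℕ} (α : Fin N → ℝ) : QOp N :=
  Matrix.of fun x y => ∏ k : Fin N, RyM (α k) (x k) (y k)

/-- The Ry-CNOT ansatz of depth `M`:
`R_M · Ladder_CNOT · R_{M−1} ⋯ Ladder_CNOT · R_0` (`R_0` applied first). -/
def ansatzY (N : ℕ) (α : ℕ → Fin N → ℝ) : ℕ → QOp N
  | 0 => rotY (α 0)
  | (M + 1) => rotY (α (M + 1)) * ladderCNOT N * ansatzY N α M

/-- Product of CZ gates `CZ_{q,q+1}` (1-based qubits) over all `q` satisfying `P`
(a diagonal matrix, since all CZ's commute). -/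
def czLayer (N : ℕ) (P : ℕ → Prop) [DecidablePred P] : QOp N :=
  Matrix.of fun x y =>
    if x = y then
      ∏ p ∈ Finset.range N,
        (if P (p + 1) ∧ bitAt x p = 1 ∧ bitAt x (p + 1) = 1 then (-1 : ℂ) else 1)
    else 0

/-- Hadamard gates on all 1-based qubits `q` satisfying `P`, identity elsewhere. -/
def hadOn (N : ℕ) (P : ℕ → Prop) [DecidablePred P] : QOp N :=
  Matrix.of fun x y =>
    ∏ k : Fin N, (if P ((k : ℕ) + 1) then HM (x k) (y k) else if x k = y k then (1 : ℂ) else 0)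

/-- The circuit `D_k` (1-based qubits, rightmost factor applied first):
`D_{2i} = (∏_{j=1}^{i−1} CZ_{2j,2j+1}) · (∏_{q=2}^{2i} H_q) · (∏_{j=1}^{i} CZ_{2j−1,2j})`,
`D_{2i+1} = (∏_{j=1}^{i} CZ_{2j,2j+1}) · (∏_{q=2}^{2i+1} H_q) · (∏_{j=1}^{i} CZ_{2j−1,2j})`. -/
def Dgate (N k : ℕ) : QOp N :=
  czLayer N (fun p => p % 2 = 0 ∧ 2 ≤ p ∧ p ≤ k - 1) *
    hadOn N (fun q => 2 ≤ q ∧ q ≤ k) *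
    czLayer N (fun p => p % 2 = 1 ∧ p ≤ k - 1)

/-- `U ⊗ I`: the operator acting as `U` on qubits `1,…,N` and identity on `A` ancilla qubits. -/
def embed (N A : ℕ) (U : QOp N) : QOp (N + A) :=
  Matrix.of fun x y =>
    U (fun i => x (Fin.castAdd A i)) (fun i => y (Fin.castAdd A i)) *
      (if ∀ i : Fin A, x (Fin.natAdd N i) = y (Fin.natAdd N i) then (1 : ℂ) else 0)

end

section LadderAux

open Matrix

/-- The bit-string map implemented by the CNOT ladder. -/
private def ladderMap (N : ℕ) : QState N → QState N :=
  fun y => layer2Map N (layer1Map N y)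

/-- Matrix (over `ZMod 2`) of the additive part of layer 1. -/
private def Am (N : ℕ) : Matrix (Fin N) (Fin N) (ZMod 2) :=
  Matrix.of fun i j =>
    if ((i : ℕ) + 1 < N ∧ ((i : ℕ) + 1) % 2 ≠ N % 2) ∧ (j : ℕ) = (i : ℕ) + 1 then 1 else 0

/-- Matrix (over `ZMod 2`) of the additive part of layer 2. -/
private def Bm (N : ℕ) : Matrix (Fin N) (Fin N) (ZMod 2) :=
  Matrix.of fun i j =>
    if ((i : ℕ) + 1 < N ∧ ((i : ℕ) + 1) % 2 = N % 2) ∧ (j : ℕ) = (i : ℕ) + 1 then 1 else 0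

private lemma Am_mulVec_apply (N : ℕ) (y : QState N) (i : Fin N) :
    (Am N).mulVec y i =
      if (i : ℕ) + 1 < N ∧ ((i : ℕ) + 1) % 2 ≠ N % 2 then bitAt y ((i : ℕ) + 1) else 0 := by
  by_cases hc : (i : ℕ) + 1 < N ∧ ((i : ℕ) + 1) % 2 ≠ N % 2
  · rw [if_pos hc]
    have : (Am N).mulVec y i = ∑ j : Fin N, (Am N) i j * y j := rfl
    rw [this, Fintype.sum_eq_single (⟨(i : ℕ) + 1, hc.1⟩ : Fin N)]
    · simp [Am, hc, bitAt, hc.1]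
    · intro b hb
      have hb' : (b : ℕ) ≠ (i : ℕ) + 1 := by
        intro h; exact hb (Fin.ext h)
      simp [Am, hb']
  · rw [if_neg hc]
    have : (Am N).mulVec y i = ∑ j : Fin N, (Am N) i j * y j := rfl
    rw [this]
    apply Finset.sum_eq_zero
    intro j _
    simp [Am, hc]

private lemma Bm_mulVec_apply (N : ℕ) (y : QState N) (i : Fin N) :
    (Bm N).mulVec y i =
      if (i : ℕ) + 1 < N ∧ ((i : ℕ) + 1) % 2 = N % 2 then bitAt y ((i : ℕ) + 1) else 0 := by
  by_cases hc : (i : ℕ) + 1 < N ∧ ((i : ℕ) + 1) % 2 = N % 2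
  · rw [if_pos hc]
    have : (Bm N).mulVec y i = ∑ j : Fin N, (Bm N) i j * y j := rfl
    rw [this, Fintype.sum_eq_single (⟨(i : ℕ) + 1, hc.1⟩ : Fin N)]
    · simp [Bm, hc, bitAt, hc.1]
    · intro b hb
      have hb' : (b : ℕ) ≠ (i : ℕ) + 1 := by
        intro h; exact hb (Fin.ext h)
      simp [Bm, hb']
  · rw [if_neg hc]
    have : (Bm N).mulVec y i = ∑ j : Fin N, (Bm N) i j * y j := rfl
    rw [this]
    apply Finset.sum_eq_zero
    intro j _
    simp [Bm, hc]

private lemma layer1_eq_mulVec (N : ℕ) (y : QState N) :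
    layer1Map N y = ((1 : Matrix (Fin N) (Fin N) (ZMod 2)) + Am N).mulVec y := by
  funext i
  rw [Matrix.add_mulVec, Matrix.one_mulVec, Pi.add_apply, Am_mulVec_apply]
  unfold layer1Map
  by_cases hc : (i : ℕ) + 1 < N ∧ ((i : ℕ) + 1) % 2 ≠ N % 2
  · rw [if_pos hc, if_pos hc]
  · rw [if_neg hc, if_neg hc, add_zero]

private lemma layer2_eq_mulVec (N : ℕ) (y : QState N) :
    layer2Map N y = ((1 : Matrix (Fin N) (Fin N) (ZMod 2)) + Bm N).mulVec y := by
  funext i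
  rw [Matrix.add_mulVec, Matrix.one_mulVec, Pi.add_apply, Bm_mulVec_apply]
  unfold layer2Map
  by_cases hc : (i : ℕ) + 1 < N ∧ ((i : ℕ) + 1) % 2 = N % 2
  · rw [if_pos hc, if_pos hc]
  · rw [if_neg hc, if_neg hc, add_zero]

/-- The full ladder matrix over `ZMod 2`. -/
private def Fm (N : ℕ) : Matrix (Fin N) (Fin N) (ZMod 2) :=
  ((1 : Matrix (Fin N) (Fin N) (ZMod 2)) + Bm N) * ((1 : Matrix (Fin N) (Fin N) (ZMod 2)) + Am N)

private lemma ladderMap_eq_mulVec (N : ℕ) (y : QState N) :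
    ladderMap N y = (Fm N).mulVec y := by
  unfold ladderMap Fm
  rw [layer1_eq_mulVec, layer2_eq_mulVec, Matrix.mulVec_mulVec]

/-- The nilpotent part. -/
private def Em (N : ℕ) : Matrix (Fin N) (Fin N) (ZMod 2) :=
  Am N + Bm N + Bm N * Am N

private lemma Fm_eq (N : ℕ) : Fm N = 1 + Em N := by
  unfold Fm Em
  noncomm_ring

private lemma Em_strict (N : ℕ) (i j : Fin N) (h : (j : ℕ) ≤ (i : ℕ)) : Em N i j = 0 := by
  have hA : Am N i j = 0 := by
    have : (j : ℕ) ≠ (i : ℕ) + 1 := by omega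
    simp [Am, this]
  have hB : Bm N i j = 0 := by
    have : (j : ℕ) ≠ (i : ℕ) + 1 := by omega
    simp [Bm, this]
  have hBA : (Bm N * Am N) i j = 0 := by
    rw [Matrix.mul_apply]
    apply Finset.sum_eq_zero
    intro l _
    by_cases hl : (l : ℕ) = (i : ℕ) + 1
    · have : (j : ℕ) ≠ (l : ℕ) + 1 := by omega
      simp [Am, this]
    · simp [Bm, hl]
  simp [Em, hA, hB, hBA]

private lemma Em_pow_zero (N : ℕ) (k : ℕ) (i j : Fin N) (h : (j : ℕ) < (i : ℕ) + k) :
    ((Em N) ^ k) i j = 0 := by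
  induction k generalizing i j with
  | zero =>
    have : i ≠ j := by intro he; omega
    simp [Matrix.one_apply, this]
  | succ k ih =>
    rw [pow_succ', Matrix.mul_apply]
    apply Finset.sum_eq_zero
    intro l _
    by_cases hl : (i : ℕ) < (l : ℕ)
    · rw [ih l j (by omega), mul_zero]
    · rw [Em_strict N i l (by omega), zero_mul]

private lemma Em_pow_N (N : ℕ) : (Em N) ^ N = 0 := by
  ext i j
  rw [Em_pow_zero N N i j (by omega)]
  simp

private lemma one_add_pow_two_pow (N m : ℕ) :
    ((1 : Matrix (Fin N) (Fin N) (ZMod 2)) + Em N) ^ (2 ^ m) = 1 + (Em N) ^ (2 ^ m) := by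
  induction m with
  | zero => simp
  | succ m ih =>
    have h2 : 2 ^ (m + 1) = 2 ^ m * 2 := by ring
    rw [h2, pow_mul, ih, pow_mul]
    have sq : ∀ X : Matrix (Fin N) (Fin N) (ZMod 2), (1 + X) ^ 2 = 1 + (X + X) + X ^ 2 := by
      intro X; noncomm_ring
    rw [sq]
    have hXX : (Em N) ^ (2 ^ m) + (Em N) ^ (2 ^ m) = 0 := by
      ext i j
      simp [ZMod.natCast_self]
      exact CharTwo.add_self_eq_zero _
    rw [hXX, add_zero]

private lemma Fm_pow_eq_one (N : ℕ) (hN : 2 ≤ N) :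
    (Fm N) ^ (2 ^ Nat.clog 2 N) = 1 := by
  rw [Fm_eq, one_add_pow_two_pow]
  have hle : N ≤ 2 ^ Nat.clog 2 N := Nat.le_pow_clog (by norm_num) N
  have : (Em N) ^ (2 ^ Nat.clog 2 N) = 0 := by
    have h : 2 ^ Nat.clog 2 N = N + (2 ^ Nat.clog 2 N - N) := by omega
    rw [h, pow_add, Em_pow_N, zero_mul]
  rw [this, add_zero]

private lemma ladderMap_iterate (N : ℕ) (k : ℕ) (y : QState N) :
    (ladderMap N)^[k] y = ((Fm N) ^ k).mulVec y := by
  induction k generalizing y with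
  | zero => simp [Matrix.one_mulVec]
  | succ k ih =>
    rw [Function.iterate_succ_apply', ih, ladderMap_eq_mulVec, Matrix.mulVec_mulVec,
      ← pow_succ']

private lemma ladderMap_iterate_id (N : ℕ) (hN : 2 ≤ N) (y : QState N) :
    (ladderMap N)^[2 ^ Nat.clog 2 N] y = y := by
  rw [ladderMap_iterate, Fm_pow_eq_one N hN, Matrix.one_mulVec]

private lemma ladderCNOT_pow_apply (N : ℕ) (k : ℕ) :
    (ladderCNOT N) ^ k =
      Matrix.of fun x y => if x = (ladderMap N)^[k] y then (1 : ℂ) else 0 := by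
  induction k with
  | zero =>
    ext x y
    simp [Matrix.one_apply, eq_comm]
    congr
  | succ k ih =>
    rw [pow_succ, ih]
    ext x y
    rw [Matrix.mul_apply]
    rw [Finset.sum_eq_single (ladderMap N y)]
    · simp [ladderCNOT, ladderMap, Function.iterate_succ_apply]
      congr
    · intro b _ hb
      have : ¬ (b = layer2Map N (layer1Map N y)) := hb
      simp [ladderCNOT, this]
    · intro h
      exact absurd (Finset.mem_univ _) h

end LadderAux

/-- for every `N ≥ 2`, the adjoint of the `N`-qubit CNOT ladder equals
`(Ladder_CNOT)^{2^{⌈log₂ N⌉} − 1}`. (`Nat.clog 2 N` is the least `m` with `N ≤ 2^m`.) -/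
theorem ladderCNOT_adjoint_eq_pow (N : ℕ) (hN : 2 ≤ N) :
    (ladderCNOT N)ᴴ = (ladderCNOT N) ^ (2 ^ Nat.clog 2 N - 1) := by
  rw [ladderCNOT_pow_apply]
  ext x y
  rw [Matrix.conjTranspose_apply, Matrix.of_apply]
  have hK : 1 ≤ 2 ^ Nat.clog 2 N := Nat.one_le_two_pow
  have hinv : ∀ z, (ladderMap N)^[2 ^ Nat.clog 2 N - 1] (ladderMap N z) = z := by
    intro z
    have h0 := ladderMap_iterate_id N hN z
    rwa [← Nat.sub_add_cancel hK, Function.iterate_succ_apply] at h0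
  have hinv' : ∀ z, ladderMap N ((ladderMap N)^[2 ^ Nat.clog 2 N - 1] z) = z := by
    intro z
    have h0 := ladderMap_iterate_id N hN z
    rwa [← Nat.sub_add_cancel hK, Function.iterate_succ_apply'] at h0
  have key : (y = layer2Map N (layer1Map N x)) ↔ (x = (ladderMap N)^[2 ^ Nat.clog 2 N - 1] y) := by
    constructor
    · intro h
      rw [h]
      exact (hinv x).symm
    · intro h
      rw [h]
      exact (hinv' y).symm
  by_cases h : y = layer2Map N (layer1Map N x)
  · rw [if_pos (key.mp h)]
    simp [ladderCNOT, h]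
  · rw [if_neg (fun hx => h (key.mpr hx))]
    simp [ladderCNOT, h]
end

section
/- For every integer N ≥ 2, (X_N · Ladder_CNOT)^{2^{⌈log₂(N+1)⌉}} = I on (ℂ²)^{⊗N}, where X_N denotes the Pauli-X gate acting on qubit N, I is the identity, and ⌈log₂(N+1)⌉ is the least integer m with N+1 ≤ 2^m. -/
open Complex

noncomputable section Aux

variable {N : ℕ}

/-- The linear part of the ladder-CNOT permutation. -/
def Tmap (N : ℕ) (y : QState N) : QState N := layer2Map N (layer1Map N y)

/-- `U = T - I` (char 2). -/
def Umap (N : ℕ) (y : QState N) : QState N := fun i => Tmap N y i + y i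

/-- basis vector at the last qubit. -/
def eE (N : ℕ) : QState N := fun i => if (i : ℕ) = N - 1 then 1 else 0

/-- The affine map implemented by `X_N · Ladder_CNOT`. -/
def Smap (N : ℕ) (y : QState N) : QState N := fun i => Tmap N y i + eE N i

lemma z2_add_self (a : ZMod 2) : a + a = 0 := by revert a; decide

lemma bitAt_add (y z : QState N) (m : ℕ) :
    bitAt (y + z) m = bitAt y m + bitAt z m := by
  unfold bitAt; split
  · rfl
  · simp

lemma layer1_add (y z : QState N) :
    layer1Map N (y + z) = layer1Map N y + layer1Map N z := by
  funext i
  simp only [layer1Map, bitAt_add, Pi.add_apply]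
  split <;> ring

lemma layer2_add (y z : QState N) :
    layer2Map N (y + z) = layer2Map N y + layer2Map N z := by
  funext i
  simp only [layer2Map, bitAt_add, Pi.add_apply]
  split <;> ring

lemma Umap_add (y z : QState N) :
    Umap N (y + z) = Umap N y + Umap N z := by
  funext i
  simp only [Umap, Tmap, layer1_add, layer2_add, Pi.add_apply]
  ring

lemma Umap_iter_add (k : ℕ) (y z : QState N) :
    (Umap N)^[k] (y + z) = (Umap N)^[k] y + (Umap N)^[k] z := by
  induction k generalizing y z with
  | zero => simp
  | succ k ih =>
    rw [Function.iterate_succ_apply, Function.iterate_succ_apply,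
      Function.iterate_succ_apply, Umap_add, ih]

/-- strict upper-triangularity of `U`. -/
lemma Umap_upper (y : QState N) (i : Fin N)
    (h : ∀ j : Fin N, (i : ℕ) < (j : ℕ) → y j = 0) : Umap N y i = 0 := by
  have hb : ∀ m : ℕ, (i : ℕ) < m → bitAt y m = 0 := by
    intro m hm
    unfold bitAt; split
    · exact h _ hm
    · rfl
  have hw' : ∀ j : Fin N, (i : ℕ) < (j : ℕ) → layer1Map N y j = 0 := by
    intro j hj
    simp only [layer1Map]
    rw [h j hj, hb ((j : ℕ) + 1) (by omega)]
    split <;> simp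
  have hw : ∀ m : ℕ, (i : ℕ) < m → bitAt (layer1Map N y) m = 0 := by
    intro m hm
    unfold bitAt; split
    · exact hw' _ hm
    · rfl
  show layer2Map N (layer1Map N y) i + y i = 0
  simp only [layer2Map]
  rw [hw ((i : ℕ) + 1) (by omega)]
  simp only [layer1Map]
  rw [hb ((i : ℕ) + 1) (by omega)]
  split <;> split <;> simp [z2_add_self]

lemma Umap_iter_kill (k : ℕ) (y : QState N) (i : Fin N) (hk : N ≤ (i : ℕ) + k) :
    (Umap N)^[k] y i = 0 := by
  induction k generalizing y i with
  | zero => exact absurd i.isLt (by omega)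
  | succ k ih =>
    rw [Function.iterate_succ_apply']
    exact Umap_upper _ i fun j hj => ih _ j (by omega)

lemma Umap_iter_kill' (k : ℕ) (hk : N ≤ k) (y : QState N) :
    (Umap N)^[k] y = 0 := by
  funext i
  exact Umap_iter_kill k y i (by omega)

lemma Smap_iter_pow (m : ℕ) (y : QState N) :
    (Smap N)^[2 ^ m] y =
      y + (Umap N)^[2 ^ m] y + (Umap N)^[2 ^ m - 1] (eE N) := by
  induction m generalizing y with
  | zero =>
    simp only [pow_zero, Nat.sub_self, Function.iterate_one, Function.iterate_zero, id_eq]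
    funext i
    simp only [Smap, Pi.add_apply]
    have h1 : Umap N y i = Tmap N y i + y i := rfl
    rw [h1]
    generalize Tmap N y i = a
    generalize y i = b
    generalize eE N i = c
    revert a b c; decide
  | succ m ih =>
    have ha1 : 1 ≤ 2 ^ m := Nat.one_le_two_pow
    have ha : 2 ^ (m + 1) = 2 ^ m + 2 ^ m := by rw [pow_succ]; omega
    rw [ha, Function.iterate_add_apply, ih, ih, Umap_iter_add, Umap_iter_add,
      ← Function.iterate_add_apply (Umap N) (2 ^ m) (2 ^ m),
      ← Function.iterate_add_apply (Umap N) (2 ^ m) (2 ^ m - 1),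
      show 2 ^ m + (2 ^ m - 1) = 2 ^ m + 2 ^ m - 1 from by omega]
    funext i
    simp only [Pi.add_apply]
    generalize y i = A
    generalize (Umap N)^[2 ^ m] y i = B
    generalize (Umap N)^[2 ^ m - 1] (eE N) i = C
    generalize (Umap N)^[2 ^ m + 2 ^ m] y i = D
    generalize (Umap N)^[2 ^ m + 2 ^ m - 1] (eE N) i = E
    revert A B C D E; decide

/-- permutation-style matrix of a map on basis states. -/
def permMat (N : ℕ) (f : QState N → QState N) : QOp N :=
  Matrix.of fun x y => if x = f y then (1 : ℂ) else 0

lemma permMat_mul (f g : QState N → QState N) :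
    permMat N f * permMat N g = permMat N (f ∘ g) := by
  ext x y
  simp only [permMat, Matrix.mul_apply, Matrix.of_apply]
  rw [Finset.sum_eq_single (g y)]
  · simp [Function.comp]
  · intro z _ hz; simp [hz]
  · intro h; exact absurd (Finset.mem_univ _) h

lemma permMat_id : permMat N (id : QState N → QState N) = 1 := by
  ext x y
  simp [permMat, Matrix.one_apply]

lemma permMat_pow (f : QState N → QState N) (k : ℕ) :
    permMat N f ^ k = permMat N f^[k] := by
  induction k with
  | zero => rw [pow_zero, Function.iterate_zero, permMat_id]
  | succ k ih => rw [pow_succ, ih, permMat_mul, ← Function.iterate_succ]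

end Aux

lemma gate1X {N : ℕ} (k : Fin N) :
    gate1 XM k = permMat N (fun y => Function.update y k (y k + 1)) := by
  ext x y
  simp only [gate1, permMat, Matrix.of_apply]
  by_cases hx : x = Function.update y k (y k + 1)
  · subst hx
    have hc : ∀ j, j ≠ k → Function.update y k (y k + 1) j = y j :=
      fun j hj => Function.update_of_ne hj _ _
    rw [if_pos hc, if_pos rfl, Function.update_self]
    have hne : ∀ a : ZMod 2, a + 1 ≠ a := by decide
    simp only [XM, Matrix.of_apply, if_neg (hne (y k))]
  · rw [if_neg hx]
    split
    · next h =>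
      by_cases hk : x k = y k
      · rw [hk]; simp [XM]
      · exfalso; apply hx; funext j
        by_cases hj : j = k
        · subst hj
          rw [Function.update_self]
          have : ∀ a b : ZMod 2, a ≠ b → a = b + 1 := by decide
          exact this _ _ hk
        · rw [Function.update_of_ne hj]; exact h j hj
    · rfl

lemma ladder_eq_permMat (N : ℕ) : ladderCNOT N = permMat N (Tmap N) := rfl

lemma flip_comp {N : ℕ} (k : Fin N) (hk : (k : ℕ) = N - 1) :
    (fun y => Function.update y k (y k + 1)) ∘ Tmap N = Smap N := by
  funext y i
  simp only [Function.comp_apply, Smap]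
  by_cases hi : i = k
  · subst hi
    rw [Function.update_self]
    have : eE N i = 1 := by simp [eE, hk]
    rw [this]
  · rw [Function.update_of_ne hi]
    have hv : (i : ℕ) ≠ N - 1 := fun h => hi (Fin.ext (h.trans hk.symm))
    have : eE N i = 0 := by simp [eE, hv]
    rw [this, add_zero]

/-- for every `N ≥ 2`, `(X_N · Ladder_CNOT)^{2^{⌈log₂(N+1)⌉}} = I` on `N`
qubits, where `X_N` is the Pauli-X gate on qubit `N` (index `N−1`). (`Nat.clog 2 (N+1)` is
the least `m` with `N+1 ≤ 2^m`.) -/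
theorem X_ladderCNOT_pow_eq_one (N : ℕ) (hN : 2 ≤ N) :
    (gate1 XM (⟨N - 1, by omega⟩ : Fin N) * ladderCNOT N) ^ (2 ^ Nat.clog 2 (N + 1)) = 1 := by
  have hm : N + 1 ≤ 2 ^ Nat.clog 2 (N + 1) := Nat.le_pow_clog (by norm_num) (N + 1)
  have h4 : (Smap N)^[2 ^ Nat.clog 2 (N + 1)] = id := by
    funext y
    rw [Smap_iter_pow, Umap_iter_kill' _ (by omega), Umap_iter_kill' _ (by omega)]
    simp
  rw [gate1X, ladder_eq_permMat, permMat_mul, flip_comp _ rfl, permMat_pow, h4, permMat_id]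
end
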